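/- arXiv:math/0511186 — 2 statements merged into one kernel-verified Lean document; each statement's English description precedes it below -/
import Mathlib

section
/- Let d ≥ 2 and λ > 0, and let μ_λ be the product probability measure on ℕ^{ℤ^d} whose coordinates ζ(j), j ∈ ℤ^d, are i.i.d. Poisson with parameter λ. Then for every a > 0 satisfying λ·(2β_d·a + 3)^d ≤ π_d·a^d, one has μ_λ({ζ : R_0(ζ) > a}) ≤ exp(−λ·(2β_d·a + 3)^d · g(λ·(2β_d·a + 3)^d/(π_d·a^d))), where g(x) = (x − 1 − log x)/x. -/
open MeasureTheory
open scoped ENNReal NNReal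

noncomputable section

/-- The level-`m` cube `K_i^m` in `ℝ^d`:
`K_i^m = {x : |x^(l) - m·i^(l)| ≤ m/2 for all l}`. -/
def cube (d : ℕ) (m : ℝ) (i : Fin d → ℤ) : Set (EuclideanSpace ℝ (Fin d)) :=
  {x | ∀ l, |x l - m * (i l : ℝ)| ≤ m / 2}

/-- The distance `ρ(A,B) = inf {|x - y| : x ∈ A, y ∈ B}` between two sets. -/
def rho (d : ℕ) (A B : Set (EuclideanSpace ℝ (Fin d))) : ℝ :=
  sInf (Set.image2 dist A B)

/-- The discrete ball `B_i(r)`: the union of the level-1 cubes `K_j^1` with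
`ρ(K_i^1, K_j^1) ≤ r` (and `B_i(0) = ∅`). -/
def dball (d : ℕ) (i : Fin d → ℤ) (r : ℝ) : Set (EuclideanSpace ℝ (Fin d)) :=
  if 0 < r then
    ⋃ j ∈ {j : Fin d → ℤ | rho d (cube d 1 i) (cube d 1 j) ≤ r}, cube d 1 j
  else ∅

/-- `π_d`, the Lebesgue volume of the unit Euclidean ball in `ℝ^d`. -/
def unitBallVol (d : ℕ) : ℝ :=
  (volume (Metric.ball (0 : EuclideanSpace ℝ (Fin d)) 1)).toReal

/-- `β_d = ⌈3 + 2√d · π_d^(1/d)⌉`. -/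
def betaD (d : ℕ) : ℝ :=
  (⌈3 + 2 * Real.sqrt d * (unitBallVol d) ^ ((1 : ℝ) / d)⌉ : ℤ)

/-- The embedding of `ℤ^d` into `ℝ^d`. -/
def embedZ (d : ℕ) (i : Fin d → ℤ) : EuclideanSpace ℝ (Fin d) :=
  WithLp.toLp 2 (fun l => (i l : ℝ))

/-- `A(K_j^m)`: the union of `K_j^m` with its `3^d - 1` neighbouring level-`m`
cubes, i.e. the cubes `K_i^m` with `‖i - j‖_∞ ≤ 1`. -/
def nbhd (d : ℕ) (m : ℝ) (j : Fin d → ℤ) : Set (EuclideanSpace ℝ (Fin d)) :=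
  ⋃ i ∈ {i : Fin d → ℤ | ‖i - j‖ ≤ 1}, cube d m i

/-- The radius `R_i(ζ) = inf {r > 0 : Σ_{j : ρ(K_j^1,K_i^1) ≤ β_d r} ζ(j) ≤ π_d r^d}`
if `ζ i > 0` (with `inf ∅ = +∞`, so the value is taken in `ℝ≥0∞`), and `R_i(ζ) = 0`
if `ζ i = 0`. -/
def Rad (d : ℕ) (ζ : (Fin d → ℤ) → ℕ) (i : Fin d → ℤ) : ℝ≥0∞ :=
  if ζ i = 0 then 0
  else sInf {t : ℝ≥0∞ | ∃ r : ℝ, 0 < r ∧ t = ENNReal.ofReal r ∧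
    ((∑ᶠ j ∈ {j : Fin d → ℤ |
        rho d (cube d 1 j) (cube d 1 i) ≤ betaD d * r}, ζ j : ℕ) : ℝ)
      ≤ unitBallVol d * r ^ d}

/-- The sup norm `‖x‖_∞` on `ℝ^d`. -/
def supNorm (d : ℕ) (x : EuclideanSpace ℝ (Fin d)) : ℝ := ⨆ l, |x l|

/-- `g(x) = (x − 1 − log x)/x` for `x > 0`. -/
def gChernoff (x : ℝ) : ℝ := (x - 1 - Real.log x) / x

/-- The Poisson mass function with parameter `λ`: `n ↦ e^{−λ} λ^n / n!`. -/
def poissonPMFR (lam : ℝ) (n : ℕ) : ℝ := Real.exp (-lam) * lam ^ n / n.factorial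

/-- `μ` is the product probability measure on `ℕ^{ℤ^d}` whose coordinates
`ζ(j)`, `j ∈ ℤ^d`, are i.i.d. Poisson with parameter `λ`, characterized by its
values on cylinder events. -/
def IsIIDPoisson (d : ℕ) (lam : ℝ) (μ : Measure ((Fin d → ℤ) → ℕ)) : Prop :=
  IsProbabilityMeasure μ ∧
  ∀ (F : Finset (Fin d → ℤ)) (k : (Fin d → ℤ) → ℕ),
    μ {ζ | ∀ j ∈ F, ζ j = k j} = ∏ j ∈ F, ENNReal.ofReal (poissonPMFR lam (k j))

/-!
The event `R_0(ζ) > a` forces the total mass of `ζ` on the cubes within distance `β_d a` of `K_0^1`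
to exceed `π_d a^d`; there are at most `(2β_d a + 3)^d` such cubes. The Poisson sum over them has
parameter `ν ≤ λ(2β_d a + 3)^d`, and the exponential Chernoff bound with the optimal tilt
`θ = log(π_d a^d / (λ(2β_d a + 3)^d))` gives the stated tail.
-/

lemma betaD_nonneg (d : ℕ) : 0 ≤ betaD d := by
  have : 0 ≤ 3 + 2 * Real.sqrt d * unitBallVol d ^ ((1 : ℝ) / d) := by
    have : 0 ≤ unitBallVol d := ENNReal.toReal_nonneg
    positivity
  unfold betaD
  exact_mod_cast Int.ceil_nonneg this

section Cubes

variable {d : ℕ}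

lemma embedZ_mem_cube (j : Fin d → ℤ) : embedZ d j ∈ cube d 1 j := by
  intro l
  simp [embedZ]

lemma abs_sub_sub_one_le_rho_cube (i j : Fin d → ℤ) (l : Fin d) :
    |(j l : ℝ) - i l| - 1 ≤ rho d (cube d 1 j) (cube d 1 i) := by
  refine le_csInf ⟨_, Set.mem_image2_of_mem (embedZ_mem_cube j) (embedZ_mem_cube i)⟩ ?_
  rintro _ ⟨x, hx, y, hy, rfl⟩
  have hxj : |x l - j l| ≤ 1 / 2 := by simpa using hx l
  have hyi : |y l - i l| ≤ 1 / 2 := by simpa using hy l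
  have hxy : |x l - y l| ≤ dist x y := PiLp.dist_apply_le x y l
  calc |(j l : ℝ) - i l| - 1
      = |(x l - y l) - (x l - j l) + (y l - i l)| - 1 := by ring_nf
    _ ≤ |x l - y l| + |x l - j l| + |y l - i l| - 1 := by
        gcongr
        exact (abs_add_le _ _).trans (add_le_add_left (abs_sub _ _) _)
    _ ≤ dist x y := by linarith

lemma setOf_rho_cube_le_subset_Icc (i : Fin d → ℤ) (r : ℝ) :
    {j | rho d (cube d 1 j) (cube d 1 i) ≤ r} ⊆
      Set.Icc (fun l => i l - ⌊r + 1⌋) (fun l => i l + ⌊r + 1⌋) := by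
  intro j (hj : rho d (cube d 1 j) (cube d 1 i) ≤ r)
  have h (l : Fin d) : |(j l : ℝ) - i l| ≤ r + 1 := by
    linarith [abs_sub_sub_one_le_rho_cube i j l]
  refine ⟨fun l => ?_, fun l => ?_⟩
  · have : (((i l - j l : ℤ)) : ℝ) ≤ r + 1 := by push_cast; linarith [(abs_le.mp (h l)).1]
    linarith [Int.le_floor.mpr this]
  · have : (((j l - i l : ℤ)) : ℝ) ≤ r + 1 := by push_cast; linarith [(abs_le.mp (h l)).2]
    linarith [Int.le_floor.mpr this]

lemma finite_setOf_rho_cube_le (i : Fin d → ℤ) (r : ℝ) :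
    {j | rho d (cube d 1 j) (cube d 1 i) ≤ r}.Finite :=
  (Set.finite_Icc _ _).subset (setOf_rho_cube_le_subset_Icc i r)

lemma card_toFinset_setOf_rho_cube_le (i : Fin d → ℤ) {r : ℝ} (hr : 0 ≤ r) :
    ((finite_setOf_rho_cube_le i r).toFinset.card : ℝ) ≤ (2 * r + 3) ^ d := by
  set M := ⌊r + 1⌋
  have hM : 0 ≤ M := Int.floor_nonneg.mpr (by linarith)
  have hcard : (finite_setOf_rho_cube_le i r).toFinset.card ≤ (2 * M + 1).toNat ^ d :=
    calc _ ≤ (Finset.Icc (fun l => i l - M) (fun l => i l + M)).card :=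
          Finset.card_le_card (Set.Finite.toFinset_subset.mpr (by
            rw [Finset.coe_Icc]; exact setOf_rho_cube_le_subset_Icc i r))
      _ = (2 * M + 1).toNat ^ d := by
          rw [Pi.card_Icc]
          simp only [Int.card_Icc, show ∀ l, i l + M + 1 - (i l - M) = 2 * M + 1 from
            fun l => by ring, Finset.prod_const, Finset.card_univ, Fintype.card_fin]
  have hcast : ((2 * M + 1).toNat : ℝ) = 2 * M + 1 := by
    exact_mod_cast Int.toNat_of_nonneg (by omega)
  calc _ ≤ (((2 * M + 1).toNat ^ d : ℕ) : ℝ) := by exact_mod_cast hcard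
    _ = (2 * M + 1 : ℝ) ^ d := by rw [Nat.cast_pow, hcast]
    _ ≤ (2 * r + 3) ^ d := by
        have : (M : ℝ) ≤ r + 1 := Int.floor_le (r + 1)
        have : (0 : ℝ) ≤ M := by exact_mod_cast hM
        exact pow_le_pow_left₀ (by positivity) (by linarith) d

end Cubes

theorem ENNReal.prod_tsum_fin {α : Type*} :
    ∀ {n : ℕ} (f : Fin n → α → ℝ≥0∞), ∏ i, ∑' a, f i a = ∑' v : Fin n → α, ∏ i, f i (v i)
  | 0, f => by simp
  | n + 1, f => by
    rw [← (Fin.consEquiv fun _ => α).tsum_eq, ENNReal.tsum_prod', Fin.prod_univ_succ,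
      ENNReal.prod_tsum_fin fun i => f i.succ, ← ENNReal.tsum_mul_right]
    refine tsum_congr fun a => ?_
    rw [← ENNReal.tsum_mul_left]
    refine tsum_congr fun v => ?_
    simp [Fin.prod_univ_succ, Fin.consEquiv]

theorem ENNReal.prod_tsum {ι α : Type*} [Fintype ι] (f : ι → α → ℝ≥0∞) :
    ∏ i, ∑' a, f i a = ∑' v : ι → α, ∏ i, f i (v i) := by
  let e := Fintype.equivFin ι
  calc ∏ i, ∑' a, f i a = ∏ i, ∑' a, f (e.symm i) a := (e.symm.prod_comp _).symm
    _ = ∑' v : Fin _ → α, ∏ i, f (e.symm i) (v i) := ENNReal.prod_tsum_fin _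
    _ = ∑' v : Fin _ → α, ∏ i, f i (v (e i)) :=
        tsum_congr fun v => by rw [← e.prod_comp]; simp
    _ = ∑' v : ι → α, ∏ i, f i (v i) :=
        (e.symm.arrowCongr (Equiv.refl α)).tsum_eq fun v => ∏ i, f i (v i)

section Cylinders

variable {κ : Type*} {μ : Measure (κ → ℕ)} {p : ℕ → ℝ≥0∞}

lemma measure_preimage_finsetRestrict_le_tsum
    (hμ : ∀ (F : Finset κ) (k : κ → ℕ), μ {ζ | ∀ j ∈ F, ζ j = k j} = ∏ j ∈ F, p (k j))
    (F : Finset κ) (A : Set (F → ℕ)) :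
    μ (F.restrict ⁻¹' A) ≤ ∑' v : A, ∏ j, p ((v : F → ℕ) j) := by
  classical
  let extend : (F → ℕ) → κ → ℕ := fun v j => if h : j ∈ F then v ⟨j, h⟩ else 0
  calc μ (F.restrict ⁻¹' A)
      ≤ μ (⋃ v : A, {ζ | ∀ j ∈ F, ζ j = extend v j}) :=
        measure_mono fun ζ hζ => Set.mem_iUnion.2 ⟨⟨_, hζ⟩, fun j hj => by simp [extend, hj]⟩
    _ ≤ ∑' v : A, μ {ζ | ∀ j ∈ F, ζ j = extend v j} := measure_iUnion_le _
    _ = ∑' v : A, ∏ j, p ((v : F → ℕ) j) :=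
        tsum_congr fun v => by rw [hμ, ← Finset.prod_coe_sort]; simp [extend]

lemma measure_lt_sum_le
    (hμ : ∀ (F : Finset κ) (k : κ → ℕ), μ {ζ | ∀ j ∈ F, ζ j = k j} = ∏ j ∈ F, p (k j))
    (F : Finset κ) (T : ℝ) {θ : ℝ} (hθ : 0 ≤ θ) :
    μ {ζ | T < ((∑ j ∈ F, ζ j : ℕ) : ℝ)} ≤
      ENNReal.ofReal (Real.exp (-(θ * T))) *
        (∑' n : ℕ, ENNReal.ofReal (Real.exp (θ * n)) * p n) ^ F.card := by
  let w : ℕ → ℝ≥0∞ := fun n => ENNReal.ofReal (Real.exp (θ * n)) * p n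
  have markov (v : F → ℕ) (hv : T < ((∑ j, v j : ℕ) : ℝ)) :
      ∏ j, p (v j) ≤ ENNReal.ofReal (Real.exp (-(θ * T))) * ∏ j, w (v j) := by
    have hexp : ENNReal.ofReal (Real.exp (-(θ * T))) * ∏ j, ENNReal.ofReal (Real.exp (θ * v j))
        = ENNReal.ofReal (Real.exp (θ * (((∑ j, v j : ℕ) : ℝ) - T))) := by
      rw [← ENNReal.ofReal_prod_of_nonneg fun j _ => (Real.exp_pos _).le,
        ← ENNReal.ofReal_mul (Real.exp_pos _).le, ← Real.exp_sum, ← Real.exp_add]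
      push_cast
      rw [mul_sub, Finset.mul_sum]
      ring_nf
    calc ∏ j, p (v j) = 1 * ∏ j, p (v j) := (one_mul _).symm
      _ ≤ ENNReal.ofReal (Real.exp (θ * (((∑ j, v j : ℕ) : ℝ) - T))) * ∏ j, p (v j) := by
          gcongr
          exact ENNReal.one_le_ofReal.2 (Real.one_le_exp (by nlinarith))
      _ = _ := by rw [← hexp, Finset.prod_mul_distrib, mul_assoc]
  calc μ {ζ | T < ((∑ j ∈ F, ζ j : ℕ) : ℝ)}
      = μ (F.restrict ⁻¹' {v | T < ((∑ j, v j : ℕ) : ℝ)}) := by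
        simp only [Set.preimage_ofPred_eq, Finset.restrict, Finset.sum_coe_sort]
    _ ≤ ∑' v : {v : F → ℕ | T < ((∑ j, v j : ℕ) : ℝ)}, ∏ j, p ((v : F → ℕ) j) :=
        measure_preimage_finsetRestrict_le_tsum hμ F _
    _ ≤ ∑' v : {v : F → ℕ | T < ((∑ j, v j : ℕ) : ℝ)},
          ENNReal.ofReal (Real.exp (-(θ * T))) * ∏ j, w ((v : F → ℕ) j) :=
        ENNReal.tsum_le_tsum fun v => markov v v.2
    _ ≤ ∑' v : F → ℕ, ENNReal.ofReal (Real.exp (-(θ * T))) * ∏ j, w (v j) :=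
        ENNReal.tsum_comp_le_tsum_of_injective Subtype.val_injective _
    _ = _ := by
        rw [ENNReal.tsum_mul_left, ← ENNReal.prod_tsum, Finset.prod_const, Finset.card_univ,
          Fintype.card_coe]

end Cylinders

lemma tsum_ofReal_exp_mul_poissonPMFR {lam : ℝ} (hlam : 0 ≤ lam) (θ : ℝ) :
    ∑' n : ℕ, ENNReal.ofReal (Real.exp (θ * n)) * ENNReal.ofReal (poissonPMFR lam n)
      = ENNReal.ofReal (Real.exp (lam * (Real.exp θ - 1))) := by
  have hterm (n : ℕ) : Real.exp (θ * n) * poissonPMFR lam n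
      = Real.exp (-lam) * ((lam * Real.exp θ) ^ n / n.factorial) := by
    rw [poissonPMFR, mul_comm θ, Real.exp_nat_mul, mul_pow]
    ring
  have hsum : HasSum (fun n : ℕ => Real.exp (θ * n) * poissonPMFR lam n)
      (Real.exp (lam * (Real.exp θ - 1))) := by
    have := (NormedSpace.expSeries_div_hasSum_exp (lam * Real.exp θ)).mul_left (Real.exp (-lam))
    rw [← Real.exp_eq_exp_ℝ, ← Real.exp_add] at this
    simp only [hterm, show lam * (Real.exp θ - 1) = -lam + lam * Real.exp θ by ring]
    exact this
  simp only [← ENNReal.ofReal_mul (Real.exp_pos _).le]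
  rw [← ENNReal.ofReal_tsum_of_nonneg (fun n => by unfold poissonPMFR; positivity)
    hsum.summable, hsum.tsum_eq]

lemma measure_lt_sum_le_of_isIIDPoisson {d : ℕ} {lam : ℝ} {μ : Measure ((Fin d → ℤ) → ℕ)}
    (hμ : IsIIDPoisson d lam μ) (hlam : 0 ≤ lam) (F : Finset (Fin d → ℤ)) (T : ℝ) {θ : ℝ}
    (hθ : 0 ≤ θ) :
    μ {ζ | T < ((∑ j ∈ F, ζ j : ℕ) : ℝ)} ≤
      ENNReal.ofReal (Real.exp (-(θ * T) + F.card * (lam * (Real.exp θ - 1)))) := by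
  refine (measure_lt_sum_le (p := fun n => ENNReal.ofReal (poissonPMFR lam n)) hμ.2 F T hθ).trans_eq
    ?_
  rw [tsum_ofReal_exp_mul_poissonPMFR hlam, ← ENNReal.ofReal_pow (Real.exp_pos _).le,
    ← ENNReal.ofReal_mul (Real.exp_pos _).le, ← Real.exp_nat_mul, ← Real.exp_add]

lemma setOf_lt_Rad_subset (d : ℕ) (i : Fin d → ℤ) {a : ℝ} (ha : 0 < a) :
    {ζ | ENNReal.ofReal a < Rad d ζ i} ⊆
      {ζ | unitBallVol d * a ^ d < ((∑ᶠ j ∈ {j : Fin d → ℤ |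
        rho d (cube d 1 j) (cube d 1 i) ≤ betaD d * a}, ζ j : ℕ) : ℝ)} := by
  intro ζ hζ
  simp only [Set.mem_ofPred_eq] at hζ ⊢
  by_contra! hle
  have hR : Rad d ζ i ≤ ENNReal.ofReal a := by
    unfold Rad
    split_ifs
    · positivity
    · exact sInf_le ⟨a, ha, rfl, hle⟩
  exact not_lt.mpr hR hζ

lemma mul_gChernoff_div {ν T : ℝ} (hν : 0 < ν) (hT : 0 < T) :
    ν * gChernoff (ν / T) = ν - T + T * Real.log (T / ν) := by
  have hlog : Real.log (ν / T) = -Real.log (T / ν) := by rw [← Real.log_inv, inv_div]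
  rw [gChernoff, hlog]
  field_simp
  ring

lemma chernoff_exponent_le {lam B T : ℝ} {N : ℕ} (hlam : 0 < lam) (hB : 0 < B)
    (hT : lam * B ≤ T) (hN : (N : ℝ) ≤ B) :
    -(Real.log (T / (lam * B)) * T) + N * (lam * (Real.exp (Real.log (T / (lam * B))) - 1)) ≤
      -(lam * B * gChernoff (lam * B / T)) := by
  have hν : 0 < lam * B := mul_pos hlam hB
  have hratio : 1 ≤ T / (lam * B) := (one_le_div hν).mpr hT
  rw [Real.exp_log (by linarith), mul_gChernoff_div hν (by linarith)]
  have : N * lam * (T / (lam * B) - 1) ≤ lam * B * (T / (lam * B) - 1) :=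
    mul_le_mul_of_nonneg_right (by nlinarith) (by linarith)
  have : lam * B * (T / (lam * B)) = T := by field_simp
  nlinarith

theorem statement8_general (d : ℕ) (lam : ℝ) (hlam : 0 < lam)
    (μ : Measure ((Fin d → ℤ) → ℕ)) (hμ : IsIIDPoisson d lam μ)
    (a : ℝ) (ha : 0 < a)
    (hcond : lam * (2 * betaD d * a + 3) ^ d ≤ unitBallVol d * a ^ d) :
    μ {ζ | ENNReal.ofReal a < Rad d ζ 0} ≤
      ENNReal.ofReal (Real.exp (-(lam * (2 * betaD d * a + 3) ^ d *
        gChernoff (lam * (2 * betaD d * a + 3) ^ d / (unitBallVol d * a ^ d))))) := by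
  set B := (2 * betaD d * a + 3) ^ d
  set T := unitBallVol d * a ^ d
  have hβa : 0 ≤ betaD d * a := mul_nonneg (betaD_nonneg d) ha.le
  have hB : 0 < B := pow_pos (by linarith) d
  set J := (finite_setOf_rho_cube_le (0 : Fin d → ℤ) (betaD d * a)).toFinset
  have hJ : (J.card : ℝ) ≤ B := (card_toFinset_setOf_rho_cube_le 0 hβa).trans_eq (by ring)
  have hθ : 0 ≤ Real.log (T / (lam * B)) :=
    Real.log_nonneg ((one_le_div (by positivity)).mpr hcond)
  calc μ {ζ | ENNReal.ofReal a < Rad d ζ 0}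
      ≤ μ {ζ | T < ((∑ j ∈ J, ζ j : ℕ) : ℝ)} := measure_mono fun ζ hζ => by
        simpa only [J, ← finsum_mem_eq_finite_toFinset_sum] using setOf_lt_Rad_subset d 0 ha hζ
    _ ≤ _ := measure_lt_sum_le_of_isIIDPoisson hμ hlam.le J T hθ
    _ ≤ _ := ENNReal.ofReal_le_ofReal (Real.exp_le_exp.mpr (chernoff_exponent_le hlam hB hcond hJ))

/-- Let `d ≥ 2` and `λ > 0`, and let `μ_λ` be the product
probability measure on `ℕ^{ℤ^d}` whose coordinates `ζ(j)`, `j ∈ ℤ^d`, are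
i.i.d. Poisson with parameter `λ`. Then for every `a > 0` satisfying
`λ·(2β_d·a + 3)^d ≤ π_d·a^d`, one has
`μ_λ({ζ : R_0(ζ) > a}) ≤ exp(−λ·(2β_d·a + 3)^d · g(λ·(2β_d·a + 3)^d/(π_d·a^d)))`,
where `g(x) = (x − 1 − log x)/x`. -/
theorem statement8 (d : ℕ) (hd : 2 ≤ d) (lam : ℝ) (hlam : 0 < lam)
    (μ : Measure ((Fin d → ℤ) → ℕ)) (hμ : IsIIDPoisson d lam μ)
    (a : ℝ) (ha : 0 < a)
    (hcond : lam * (2 * betaD d * a + 3) ^ d ≤ unitBallVol d * a ^ d) :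
    μ {ζ | ENNReal.ofReal a < Rad d ζ 0} ≤
      ENNReal.ofReal (Real.exp (-(lam * (2 * betaD d * a + 3) ^ d *
        gChernoff (lam * (2 * betaD d * a + 3) ^ d / (unitBallVol d * a ^ d))))) :=
  statement8_general d lam hlam μ hμ a ha hcond
end
end

section
/- Let d ≥ 2, t > 4√d, j, l, i ∈ ℤ^d, and set r₁ = t/(2(β_d + 1)). Suppose that K_l^1 ⊆ {x ∈ ℝ^d : inf_{y ∈ K_j^{3t}} ‖x − y‖_∞ ≤ 2t} and ρ(K_i^1, K_l^1) ≤ r₁. Then B_i(β_d·r₁) ⊆ A(K_j^{3t}). -/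
/-! A point `x` of `B_i(β_d r₁)` lies in some unit cube `K_k^1`. Going `x → k → i → l → 3t·j`
one coordinate at a time, each leg is bounded by a cube half-side or a `ρ`-distance plus one, so
`|x^(c) − 3t j^(c)| ≤ 1/2 + (β_d r₁ + 1) + (r₁ + 1) + (2t + 3t/2) = 4t + 5/2 ≤ 9t/2`, using
`(β_d + 1) r₁ = t/2` and `t > 4√2 > 5`. Every point within sup-distance `9t/2 = 3 · (3t/2)` of
`3t·j` lies in one of the `3^d` cubes making up `A(K_j^{3t})`. -/

open MeasureTheory
open scoped ENNReal NNReal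

noncomputable section

lemma smul_embedZ_mem_cube {d : ℕ} {m : ℝ} (hm : 0 ≤ m) (a : Fin d → ℤ) :
    m • embedZ d a ∈ cube d m a := fun c => by
  simp only [embedZ, PiLp.smul_apply, smul_eq_mul, sub_self, abs_zero]
  linarith

lemma abs_sub_le_rho_add {d : ℕ} {m : ℝ} (hm : 0 ≤ m) (a b : Fin d → ℤ) (c : Fin d) :
    |m * (a c : ℝ) - m * (b c : ℝ)| ≤ rho d (cube d m a) (cube d m b) + m := by
  suffices h : |m * (a c : ℝ) - m * (b c : ℝ)| - m ≤ rho d (cube d m a) (cube d m b) by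
    linarith
  refine le_csInf ⟨_, Set.mem_image2_of_mem (smul_embedZ_mem_cube hm a)
    (smul_embedZ_mem_cube hm b)⟩ ?_
  rintro _ ⟨u, hu, v, hv, rfl⟩
  have huv : |u c - v c| ≤ dist u v := by
    simpa only [Real.dist_eq] using PiLp.dist_apply_le u v c
  have hu := hu c
  have hv := hv c
  rw [abs_sub_comm] at hu
  linarith [abs_sub_le (m * (a c : ℝ)) (u c) (m * (b c : ℝ)),
    abs_sub_le (u c) (v c) (m * (b c : ℝ))]

lemma abs_apply_le_supNorm {d : ℕ} (x : EuclideanSpace ℝ (Fin d)) (c : Fin d) :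
    |x c| ≤ supNorm d x :=
  le_ciSup (f := fun l => |x l|) (Set.finite_range _).bddAbove c

lemma abs_sub_le_of_sInf_supNorm_le {d : ℕ} {m s : ℝ} (hm : 0 ≤ m) {j : Fin d → ℤ}
    {x : EuclideanSpace ℝ (Fin d)}
    (hx : sInf ((fun y => supNorm d (x - y)) '' cube d m j) ≤ s) (c : Fin d) :
    |x c - m * (j c : ℝ)| ≤ s + m / 2 := by
  suffices h : |x c - m * (j c : ℝ)| - m / 2 ≤
      sInf ((fun y => supNorm d (x - y)) '' cube d m j) by linarith
  refine le_csInf ⟨_, Set.mem_image_of_mem _ (smul_embedZ_mem_cube hm j)⟩ ?_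
  rintro _ ⟨y, hy, rfl⟩
  have hxy := abs_apply_le_supNorm (x - y) c
  rw [PiLp.sub_apply] at hxy
  linarith [hy c, abs_sub_le (x c) (y c) (m * (j c : ℝ))]

lemma mem_nbhd_of_abs_sub_le {d : ℕ} {m : ℝ} {j : Fin d → ℤ} {x : EuclideanSpace ℝ (Fin d)}
    (hx : ∀ c, |x c - m * (j c : ℝ)| ≤ 3 * m / 2) : x ∈ nbhd d m j := by
  classical
  let e : Fin d → ℤ := fun c =>
    if m * (j c : ℝ) + m / 2 < x c then 1
    else if x c < m * (j c : ℝ) - m / 2 then -1 else 0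
  simp only [nbhd, Set.mem_iUnion, Set.mem_ofPred_eq]
  refine ⟨j + e, ?_, fun c => ?_⟩
  · rw [add_sub_cancel_left, pi_norm_le_iff_of_nonneg zero_le_one]
    intro c
    rw [Int.norm_eq_abs]
    simp only [e]
    split_ifs <;> norm_num
  · have hxc := abs_le.mp (hx c)
    simp only [e, Pi.add_apply, Int.cast_add]
    split_ifs <;> rw [abs_le] <;> push_cast <;> constructor <;> linarith

lemma exists_mem_cube_of_mem_dball {d : ℕ} {i : Fin d → ℤ} {r : ℝ}
    {x : EuclideanSpace ℝ (Fin d)} (hx : x ∈ dball d i r) :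
    ∃ k, rho d (cube d 1 i) (cube d 1 k) ≤ r ∧ x ∈ cube d 1 k := by
  unfold dball at hx
  split_ifs at hx
  · simpa only [Set.mem_iUnion, Set.mem_ofPred_eq, exists_prop] using hx
  · exact absurd hx (Set.notMem_empty x)

lemma three_le_betaD (d : ℕ) : (3 : ℝ) ≤ betaD d := by
  have h : (0 : ℝ) ≤ 2 * Real.sqrt d * unitBallVol d ^ ((1 : ℝ) / d) := by
    unfold unitBallVol
    positivity
  unfold betaD
  linarith [Int.le_ceil (3 + 2 * Real.sqrt d * unitBallVol d ^ ((1 : ℝ) / d))]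

/-- Let `d ≥ 2`, `t > 4√d`, `j, l, i ∈ ℤ^d`, and set
`r₁ = t/(2(β_d + 1))`. Suppose that
`K_l^1 ⊆ {x ∈ ℝ^d : inf_{y ∈ K_j^{3t}} ‖x − y‖_∞ ≤ 2t}` and
`ρ(K_i^1, K_l^1) ≤ r₁`. Then `B_i(β_d·r₁) ⊆ A(K_j^{3t})`. -/
theorem statement15 (d : ℕ) (hd : 2 ≤ d) (t : ℝ) (ht : 4 * Real.sqrt d < t)
    (j l i : Fin d → ℤ)
    (hl : cube d 1 l ⊆
      {x | sInf ((fun y => supNorm d (x - y)) '' cube d (3 * t) j) ≤ 2 * t})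
    (hi : rho d (cube d 1 i) (cube d 1 l) ≤ t / (2 * (betaD d + 1))) :
    dball d i (betaD d * (t / (2 * (betaD d + 1)))) ⊆ nbhd d (3 * t) j := by
  have hβ := three_le_betaD d
  have ht5 : 5 < t := by
    have hd' : (2 : ℝ) ≤ d := by exact_mod_cast hd
    have : (5 / 4 : ℝ) ≤ Real.sqrt d := Real.le_sqrt_of_sq_le (by linarith)
    linarith
  set r₁ := t / (2 * (betaD d + 1)) with hr₁
  have hradii : betaD d * r₁ + r₁ = t / 2 := by
    rw [hr₁]
    field_simp
  intro x hx
  obtain ⟨k, hk, hxk⟩ := exists_mem_cube_of_mem_dball hx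
  have hl₀ := abs_sub_le_of_sInf_supNorm_le (by linarith)
    (hl (by simpa only [one_smul] using smul_embedZ_mem_cube zero_le_one l))
  refine mem_nbhd_of_abs_sub_le fun c => ?_
  have hxk := hxk c
  have hki := abs_sub_le_rho_add zero_le_one i k c
  have hil := abs_sub_le_rho_add zero_le_one i l c
  have hl₀ := hl₀ c
  simp only [one_mul, embedZ, PiLp.toLp_apply] at hxk hki hil hl₀
  rw [abs_sub_comm] at hki
  linarith [abs_sub_le (x c) (k c : ℝ) (3 * t * (j c : ℝ)),
    abs_sub_le (k c : ℝ) (i c : ℝ) (3 * t * (j c : ℝ)),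
    abs_sub_le (i c : ℝ) (l c : ℝ) (3 * t * (j c : ℝ))]
end
end
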